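/- Let S be a string of length n and let w be a positive integer with 2^w > n. Then there exist an offset δ ∈ [0 .. ⌊n/2⌋] and checkpoints i_1, i_2, …, i_w with i_j − δ ∈ [1 .. n] for every j ∈ [1 .. w], such that: for every offset δ' ∈ [0 .. ⌊n/2⌋] for which δ' − δ is not an integer multiple of per(S), there exists a checkpoint i_j with i_j − δ' ∈ [1 .. n] and S[i_j − δ'] ≠ S[i_j − δ]. -/

import Mathlib

/-- A string of length `n` is modeled as a function `S : ℕ → α`, read at the
1-indexed positions `1, …, n`.  A positive integer `p ≤ n` is a *period* of `S`
if `S[i] = S[i+p]` holds for all `1 ≤ i ≤ n - p`. -/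
def IsPeriod {α : Type*} (S : ℕ → α) (n p : ℕ) : Prop :=
  1 ≤ p ∧ p ≤ n ∧ ∀ i, 1 ≤ i → i + p ≤ n → S i = S (i + p)

/-- `per(S)`: the minimal period of the length-`n` string `S`. -/
noncomputable def minPer {α : Type*} (S : ℕ → α) (n : ℕ) : ℕ :=
  sInf {p | IsPeriod S n p}

/-!
Let `p = per(S)`. If `p > n/2`, any two offsets `δ₁ < δ₂ ≤ n/2` disagree at some position
readable under both, since otherwise `δ₂ - δ₁ ≤ n/2` would be a smaller period. If `p ≤ n/2`,
two offsets whose difference is not a multiple of `p` already disagree inside the window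
`(n/2, n]`, which every offset can read: otherwise `δ₂ - δ₁ < p` would be a period of a piece of
`S` of length at least `p + (δ₂ - δ₁)`, and such a period propagates along the period `p` to all
of `S`. In both cases a set of candidate offsets whose pairs are all separated by some position
can be halved by a single position, keeping the smaller class of the split; after `w` halvings
one offset `δ` is left, together with `w` positions separating it from every other candidate,
and `p`-periodicity moves this separation from the residues mod `p` to all offsets.
-/

theorem List.getD_mem_cons {β : Type*} (l : List β) (n : ℕ) (d : β) : l.getD n d ∈ d :: l := by
  rcases lt_or_ge n l.length with h | h
  · rw [List.getD_eq_getElem _ _ h]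
    exact List.mem_cons_of_mem _ (List.getElem_mem h)
  · rw [List.getD_eq_default _ _ h]
    exact List.mem_cons_self

theorem Nat.exists_modEq_mem_Ico (a j : ℕ) {p : ℕ} (hp : 0 < p) :
    ∃ x ∈ Set.Ico a (a + p), x ≡ j [MOD p] := by
  refine ⟨a + (j + p * a - a) % p,
    ⟨by omega, by have := Nat.mod_lt (j + p * a - a) hp; omega⟩, ?_⟩
  calc a + (j + p * a - a) % p ≡ a + (j + p * a - a) [MOD p] := (Nat.mod_modEq _ _).add_left a
    _ = j + p * a := by have := Nat.le_mul_of_pos_left a hp; omega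
    _ ≡ j [MOD p] := by simp [Nat.ModEq]

theorem Finset.exists_separated_subset_of_ne {β γ : Type*} (g : β → γ) {A : Finset β} {k : ℕ}
    (hcard : A.card ≤ 2 ^ (k + 1)) {a b : β} (ha : a ∈ A) (hb : b ∈ A) (hab : g a ≠ g b) :
    ∃ B ⊆ A, B.Nonempty ∧ B.card ≤ 2 ^ k ∧ ∀ x ∈ B, ∀ y ∈ A, y ∉ B → g y ≠ g x := by
  classical
  have hsplit := A.card_filter_add_card_filter_not (fun x => g x = g a)
  rw [pow_succ] at hcard
  rcases le_or_gt (A.filter (fun x => g x = g a)).card (2 ^ k) with h | h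
  · refine ⟨A.filter (fun x => g x = g a), A.filter_subset _, ⟨a, by simp [ha]⟩, h,
      fun x hx y hy hyB => ?_⟩
    simp only [Finset.mem_filter] at hx hyB
    exact hx.2 ▸ fun h => hyB ⟨hy, h⟩
  · refine ⟨A.filter (fun x => ¬ g x = g a), A.filter_subset _, ⟨b, by simp [hb, Ne.symm hab]⟩,
      by omega, fun x hx y hy hyB => ?_⟩
    simp only [Finset.mem_filter, not_and, not_not] at hx hyB
    exact (hyB hy).symm ▸ Ne.symm hx.2

/-- `f i b` is the outcome of test `i` on candidate `b`, and `R i b` says that test `i` may be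
applied to `b`. Each test halves the candidates by keeping the smaller class of its split; the
order-convexity of `R i` makes a test valid on the two extreme candidates valid on all of them. -/
theorem exists_isolating_tests {β ι γ : Type*} [LinearOrder β] (f : ι → β → γ)
    (R : ι → β → Prop) (hR : ∀ i, {b | R i b}.OrdConnected) (k : ℕ) {A : Finset β}
    (hne : A.Nonempty) (hcard : A.card ≤ 2 ^ k)
    (hsep : ∀ a ∈ A, ∀ b ∈ A, a < b → ∃ i, R i a ∧ R i b ∧ f i a ≠ f i b) :
    ∃ δ ∈ A, ∃ L : List ι, L.length ≤ k ∧ (∀ i ∈ L, R i δ) ∧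
      ∀ b ∈ A, b ≠ δ → ∃ i ∈ L, R i b ∧ f i b ≠ f i δ := by
  induction k generalizing A with
  | zero =>
    obtain ⟨δ, hδ⟩ := hne
    exact ⟨δ, hδ, [], le_rfl, by simp,
      fun b hb hbδ => absurd (Finset.card_le_one.mp hcard b hb δ hδ) hbδ⟩
  | succ k ih =>
    rcases (A.min'_le _ (A.max'_mem hne)).eq_or_lt with hmM | hmM
    · refine ⟨_, A.min'_mem hne, [], by simp, by simp, fun b hb hbδ => ?_⟩
      exact absurd (le_antisymm (hmM ▸ A.le_max' b hb) (A.min'_le b hb)) hbδ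
    obtain ⟨i₀, hm, hM, hi₀⟩ := hsep _ (A.min'_mem hne) _ (A.max'_mem hne) hmM
    have hRA : ∀ b ∈ A, R i₀ b := fun b hb =>
      (hR i₀).out hm hM ⟨A.min'_le b hb, A.le_max' b hb⟩
    obtain ⟨B, hBA, hBne, hBcard, hBsep⟩ :=
      A.exists_separated_subset_of_ne (f i₀) hcard (A.min'_mem hne) (A.max'_mem hne) hi₀
    obtain ⟨δ, hδ, L, hL, hLδ, hLsep⟩ := ih hBne hBcard
      (fun a ha b hb hab => hsep a (hBA ha) b (hBA hb) hab)
    refine ⟨δ, hBA hδ, i₀ :: L, by simpa using hL, ?_, fun b hb hbδ => ?_⟩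
    · simpa [hRA δ (hBA hδ)] using hLδ
    by_cases hbB : b ∈ B
    · obtain ⟨i, hi, h⟩ := hLsep b hbB hbδ
      exact ⟨i, List.mem_cons_of_mem _ hi, h⟩
    · exact ⟨i₀, List.mem_cons_self, hRA b hb, hBsep δ hδ b hb hbB⟩

def IsPeriodOn {α : Type*} (S : ℕ → α) (a b q : ℕ) : Prop :=
  ∀ j, a ≤ j → j + q ≤ b → S j = S (j + q)

section Periods

variable {α : Type*} {S : ℕ → α}

theorem IsPeriod.isPeriodOn {n p : ℕ} (h : IsPeriod S n p) : IsPeriodOn S 1 n p := h.2.2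

theorem IsPeriodOn.eq_add_mul {a b p : ℕ} (h : IsPeriodOn S a b p) {x : ℕ} (hx : a ≤ x) :
    ∀ t, x + p * t ≤ b → S x = S (x + p * t)
  | 0, _ => rfl
  | t + 1, hb => by
    rw [h.eq_add_mul hx t (by nlinarith), h (x + p * t) (by omega) (by nlinarith), mul_add_one,
      add_assoc]

theorem IsPeriodOn.eq_of_modEq {a b p : ℕ} (h : IsPeriodOn S a b p) {x y : ℕ} (hx : a ≤ x)
    (hxb : x ≤ b) (hy : a ≤ y) (hyb : y ≤ b) (hxy : x ≡ y [MOD p]) : S x = S y := by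
  wlog hle : x ≤ y generalizing x y
  · exact (this hy hyb hx hxb hxy.symm (by omega)).symm
  obtain ⟨t, ht⟩ := (Nat.modEq_iff_dvd' hle).mp hxy
  rw [h.eq_add_mul hx t (by omega), ← ht, Nat.add_sub_cancel' hle]

theorem isPeriodOn_of_forall_eq {a b m M : ℕ} (hmM : m ≤ M)
    (h : ∀ i, a + M ≤ i → i ≤ b + m → S (i - M) = S (i - m)) : IsPeriodOn S a b (M - m) := by
  intro j hj hjb
  have := h (j + M) (by omega) (by omega)
  rwa [Nat.add_sub_cancel, show j + M - m = j + (M - m) by omega] at this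

theorem IsPeriod.of_isPeriodOn {n p d a b : ℕ} (hp : IsPeriod S n p) (hd : IsPeriodOn S a b d)
    (hd1 : 1 ≤ d) (ha : 1 ≤ a) (hb : b ≤ n) (hlen : a + p + d ≤ b + 1) : IsPeriod S n d := by
  refine ⟨hd1, by omega, fun j hj hjn => ?_⟩
  -- `j` is congruent mod `p` to one of the first `p` positions of the window
  obtain ⟨x, ⟨hax, hxp⟩, hxj⟩ := Nat.exists_modEq_mem_Ico a j (p := p) hp.1
  calc S j = S x := hp.isPeriodOn.eq_of_modEq hj (by omega) (by omega) (by omega) hxj.symm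
    _ = S (x + d) := hd x hax (by omega)
    _ = S (j + d) :=
      hp.isPeriodOn.eq_of_modEq (by omega) (by omega) (by omega) hjn (hxj.add_right d)

theorem isPeriod_self {n : ℕ} (hn : 1 ≤ n) : IsPeriod S n n :=
  ⟨hn, le_rfl, fun _ _ _ => by omega⟩

theorem isPeriod_minPer {n : ℕ} (hn : 1 ≤ n) : IsPeriod S n (minPer S n) :=
  Nat.sInf_mem (s := {p | IsPeriod S n p}) ⟨n, isPeriod_self hn⟩

theorem minPer_le {n q : ℕ} (h : IsPeriod S n q) : minPer S n ≤ q :=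
  Nat.sInf_le h

theorem exists_ne_of_sub_lt_minPer {n m M : ℕ} (hmM : m < M) (hM : M ≤ n)
    (hd : M - m < minPer S n) : ∃ i, M < i ∧ i ≤ m + n ∧ S (i - M) ≠ S (i - m) := by
  by_contra! h
  have hper : IsPeriod S n (M - m) := ⟨by omega, by omega,
    isPeriodOn_of_forall_eq hmM.le fun i hi hin => h i (by omega) (by omega)⟩
  exact absurd (minPer_le hper) (by omega)

theorem exists_ne_of_sub_lt_minPer_le_half {n m M : ℕ} (hn : 1 ≤ n)
    (hp : minPer S n ≤ n / 2) (hmM : m < M) (hM : M ≤ n / 2) (hd : M - m < minPer S n) :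
    ∃ i, n / 2 < i ∧ i ≤ n ∧ S (i - M) ≠ S (i - m) := by
  by_contra! h
  have hwin : IsPeriodOn S (n / 2 + 1 - M) (n - m) (M - m) :=
    isPeriodOn_of_forall_eq hmM.le fun i hi hin => h i (by omega) (by omega)
  have hper := (isPeriod_minPer hn).of_isPeriodOn hwin (by omega) (by omega) (by omega) (by omega)
  exact absurd (minPer_le hper) (by omega)

end Periods

section Sample

variable {α : Type*}

/-- `L` is the list of checkpoints of a successful deterministic sample `(δ; L)` for `S`. -/
def IsDeterministicSample (S : ℕ → α) (n δ : ℕ) (L : List ℕ) : Prop :=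
  (∀ i ∈ L, δ < i ∧ i ≤ δ + n) ∧
    ∀ δ' ≤ n / 2, ¬ δ ≡ δ' [MOD minPer S n] →
      ∃ i ∈ L, δ' < i ∧ i ≤ δ' + n ∧ S (i - δ') ≠ S (i - δ)

variable {S : ℕ → α} {n : ℕ}

theorem exists_isDeterministicSample_of_minPer_le_half (hn : 1 ≤ n) (hp : minPer S n ≤ n / 2)
    {k : ℕ} (hk : minPer S n ≤ 2 ^ k) :
    ∃ δ ≤ n / 2, ∃ L : List ℕ, L.length ≤ k ∧ IsDeterministicSample S n δ L := by
  set p := minPer S n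
  have hper : IsPeriod S n p := isPeriod_minPer hn
  obtain ⟨δ, hδ, L, hL, hLδ, hLsep⟩ :=
    exists_isolating_tests (fun i δ => S (i - δ)) (fun i _ => n / 2 < i ∧ i ≤ n)
      (fun _ => ⟨fun _ hx _ _ _ _ => hx⟩) k (A := Finset.range p)
      ⟨0, Finset.mem_range.mpr hper.1⟩ (by simpa using hk)
      fun a ha b hb hab => by
        simp only [Finset.mem_range] at ha hb
        obtain ⟨i, h⟩ := exists_ne_of_sub_lt_minPer_le_half hn hp hab (by omega) (by omega)
        exact ⟨i, ⟨h.1, h.2.1⟩, ⟨h.1, h.2.1⟩, h.2.2.symm⟩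
  rw [Finset.mem_range] at hδ
  refine ⟨δ, by omega, L, hL, fun i hi => by have := hLδ i hi; constructor <;> omega,
    fun δ' hδ' hmod => ?_⟩
  -- `δ'` is compared with `δ` through its residue `r`, which reads the same letters as `δ'`
  -- at every position of the window `(n/2, n]`.
  set r := δ' % p
  have hδ'r : δ' ≡ r [MOD p] := (Nat.mod_modEq δ' p).symm
  have hrδ : r ≠ δ := fun h => hmod (h ▸ hδ'r.symm)
  obtain ⟨i, hi, ⟨hi₁, hi₂⟩, hne⟩ :=
    hLsep r (Finset.mem_range.mpr (Nat.mod_lt δ' hper.1)) hrδ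
  have hrδ' : r ≤ δ' := Nat.mod_le δ' p
  have hshift : i - δ' ≡ i - r [MOD p] := hδ'r.add_right_cancel <| by
    rw [Nat.sub_add_cancel (by omega), Nat.sub_add_cancel (by omega)]
  refine ⟨i, hi, by omega, by omega, ?_⟩
  rwa [hper.isPeriodOn.eq_of_modEq (by omega) (by omega) (by omega) (by omega) hshift]

theorem exists_isDeterministicSample_of_half_lt_minPer (hp : n / 2 < minPer S n) {k : ℕ}
    (hk : n / 2 + 1 ≤ 2 ^ k) :
    ∃ δ ≤ n / 2, ∃ L : List ℕ, L.length ≤ k ∧ IsDeterministicSample S n δ L := by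
  obtain ⟨δ, hδ, L, hL, hLδ, hLsep⟩ :=
    exists_isolating_tests (fun i δ => S (i - δ)) (fun i δ => δ < i ∧ i ≤ δ + n)
      (fun _ => ⟨fun _ hx _ hy _ hz =>
        ⟨hz.2.trans_lt hy.1, hx.2.trans (Nat.add_le_add_right hz.1 n)⟩⟩)
      k (A := Finset.range (n / 2 + 1)) ⟨0, by simp⟩ (by simpa using hk)
      fun a ha b hb hab => by
        simp only [Finset.mem_range] at ha hb
        obtain ⟨i, h⟩ := exists_ne_of_sub_lt_minPer (S := S) (n := n) hab (by omega) (by omega)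
        exact ⟨i, ⟨by omega, by omega⟩, ⟨h.1, by omega⟩, h.2.2.symm⟩
  rw [Finset.mem_range] at hδ
  refine ⟨δ, by omega, L, hL, hLδ, fun δ' hδ' hmod => ?_⟩
  obtain ⟨i, hi, h⟩ := hLsep δ' (Finset.mem_range.mpr (by omega)) fun h => hmod (h ▸ rfl)
  exact ⟨i, hi, h.1.1, h.1.2, h.2⟩

end Sample

theorem deterministic_sample_exists_general {α : Type*} (S : ℕ → α) (n w : ℕ)
    (hn : 1 ≤ n) (hpow : n < 2 ^ w) :
    ∃ (δ : ℕ) (i : ℕ → ℕ), δ ≤ n / 2 ∧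
      (∀ j, 1 ≤ j → j ≤ w → δ + 1 ≤ i j ∧ i j ≤ δ + n) ∧
      (∀ δ', δ' ≤ n / 2 → ¬ ((minPer S n : ℤ) ∣ ((δ' : ℤ) - (δ : ℤ))) →
        ∃ j, 1 ≤ j ∧ j ≤ w ∧ δ' + 1 ≤ i j ∧ i j ≤ δ' + n ∧
          S (i j - δ') ≠ S (i j - δ)) := by
  obtain ⟨δ, hδ, L, hL, hLδ, hLsep⟩ :
      ∃ δ ≤ n / 2, ∃ L : List ℕ, L.length ≤ w ∧ IsDeterministicSample S n δ L := by
    rcases le_or_gt (minPer S n) (n / 2) with hp | hp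
    · exact exists_isDeterministicSample_of_minPer_le_half hn hp (by omega)
    · exact exists_isDeterministicSample_of_half_lt_minPer hp (by omega)
  -- checkpoints beyond the end of `L` repeat the harmless position `δ + 1`
  refine ⟨δ, fun j => L.getD (j - 1) (δ + 1), hδ, fun j _ _ => ?_, fun δ' hδ' hdvd => ?_⟩
  · beta_reduce
    rcases List.mem_cons.mp (L.getD_mem_cons (j - 1) (δ + 1)) with h | h
    · omega
    · exact hLδ _ h
  · obtain ⟨i, hi, h⟩ := hLsep δ' hδ' fun hmod => hdvd (Nat.modEq_iff_dvd.mp hmod)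
    obtain ⟨idx, hidx, rfl⟩ := List.getElem_of_mem hi
    exact ⟨idx + 1, by omega, by omega, by
      simp only [Nat.add_sub_cancel, List.getD_eq_getElem _ _ hidx]
      exact h⟩

/-- **Existence of a successful deterministic sample.** For any string `S` of length `n ≥ 1`
and any `w ≥ 1` with `2^w > n`, there exist an offset `δ ∈ [0 .. ⌊n/2⌋]` and checkpoints
`i 1, …, i w` with `i j - δ ∈ [1 .. n]`, such that for every offset `δ' ∈ [0 .. ⌊n/2⌋]`
with `δ' - δ` not an integer multiple of `per(S)`, some checkpoint `i j` satisfies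
`i j - δ' ∈ [1 .. n]` and `S[i j - δ'] ≠ S[i j - δ]`. -/
theorem deterministic_sample_exists {α : Type*} (S : ℕ → α) (n w : ℕ)
    (hn : 1 ≤ n) (hw : 1 ≤ w) (hpow : n < 2 ^ w) :
    ∃ (δ : ℕ) (i : ℕ → ℕ), δ ≤ n / 2 ∧
      (∀ j, 1 ≤ j → j ≤ w → δ + 1 ≤ i j ∧ i j ≤ δ + n) ∧
      (∀ δ', δ' ≤ n / 2 → ¬ ((minPer S n : ℤ) ∣ ((δ' : ℤ) - (δ : ℤ))) →
        ∃ j, 1 ≤ j ∧ j ≤ w ∧ δ' + 1 ≤ i j ∧ i j ≤ δ' + n ∧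
          S (i j - δ') ≠ S (i j - δ)) :=
  deterministic_sample_exists_general S n w hn hpow
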